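/- There is no family of associative multiplications m_t on ℂ² with m_0 equal to the multiplication of the algebra d₃ (x² = 0, xθ = x, θx = 0, θ² = θ) such that m_t is non-isomorphic to m_0 to first order; more precisely, every infinitesimal deformation m_0 + tφ of d₃ (associative mod t²) is equivalent to the trivial one via an infinitesimal automorphism. -/

import Mathlib

/-- The underlying 2-dimensional complex vector space, with coordinates in the
basis `x = (1,0)`, `θ = (0,1)`. -/
abbrev V : Type := ℂ × ℂ

/-- A multiplication `V → V → V` is bilinear. -/
def IsBilin (m : V → V → V) : Prop :=
  (∀ a b c : V, m (a + b) c = m a c + m b c) ∧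
  (∀ (s : ℂ) (a b : V), m (s • a) b = s • m a b) ∧
  (∀ a b c : V, m a (b + c) = m a b + m a c) ∧
  (∀ (s : ℂ) (a b : V), m a (s • b) = s • m a b)

/-- Associativity of a multiplication. -/
def IsAssoc (m : V → V → V) : Prop :=
  ∀ a b c : V, m (m a b) c = m a (m b c)

/-- Two multiplications on `V` are isomorphic algebra structures. -/
def AlgIso (m m' : V → V → V) : Prop :=
  ∃ g : V ≃ₗ[ℂ] V, ∀ a b : V, m' a b = g.symm (m (g a) (g b))

/-- `d₁`: `x² = x`, `θ² = θ`, `xθ = θx = 0`. -/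
def mul1 (a b : V) : V := (a.1 * b.1, a.2 * b.2)
/-- `d₂`: `θ² = θ`, other products `0`. -/
def mul2 (a b : V) : V := (0, a.2 * b.2)
/-- `d₃`: `xθ = x`, `θ² = θ`, other products `0`. -/
def mul3 (a b : V) : V := (a.1 * b.2, a.2 * b.2)
/-- `d₄`: `θx = x`, `θ² = θ`, other products `0`. -/
def mul4 (a b : V) : V := (a.2 * b.1, a.2 * b.2)
/-- `d₅`: `xθ = θx = x`, `θ² = θ`, `x² = 0`. -/
def mul5 (a b : V) : V := (a.1 * b.2 + a.2 * b.1, a.2 * b.2)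
/-- `d₆`: `θ² = x`, other products `0`. -/
def mul6 (a b : V) : V := (a.2 * b.2, 0)

/-- Hochschild 2-cocycle condition for a bilinear map `φ` with respect to the
multiplication `mul`. -/
def IsCocycle2 (mul φ : V → V → V) : Prop :=
  ∀ a b c : V, mul a (φ b c) - φ (mul a b) c + φ a (mul b c) - mul (φ a b) c = 0

/-- Hochschild 2-coboundary condition. -/
def IsCoboundary2 (mul φ : V → V → V) : Prop :=
  ∃ l : V →ₗ[ℂ] V, ∀ a b : V, φ a b = mul a (l b) - l (mul a b) + mul (l a) b

/-! The first coordinate of the cocycle identity on the six basis triples `(x,x,x)`, `(x,x,θ)`,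
`(x,θ,x)`, `(x,θ,θ)`, `(θ,θ,x)`, `(θ,θ,θ)` forces `φ(x,x) = (α,0)`, `φ(x,θ) = (β,0)`,
`φ(θ,x) = (0,α)`, `φ(θ,θ) = (0,β)` for some `α, β`. These are exactly the values on basis pairs
of the coboundary of `λ(p) = (α p₁ + β p₂) θ`, and a bilinear map is determined by its values on
basis pairs. -/

def ex : V := (1, 0)

def eθ : V := (0, 1)

@[simp] lemma ex_fst : ex.1 = 1 := rfl

@[simp] lemma ex_snd : ex.2 = 0 := rfl

@[simp] lemma eθ_fst : eθ.1 = 0 := rfl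

@[simp] lemma eθ_snd : eθ.2 = 1 := rfl

@[simp] lemma mul3_ex_ex : mul3 ex ex = 0 := by simp [mul3, ex]

@[simp] lemma mul3_ex_eθ : mul3 ex eθ = ex := by simp [mul3, ex, eθ]

@[simp] lemma mul3_eθ_ex : mul3 eθ ex = 0 := by simp [mul3, ex, eθ]

@[simp] lemma mul3_eθ_eθ : mul3 eθ eθ = eθ := by simp [mul3, eθ]

lemma eq_smul_ex_add_smul_eθ (a : V) : a = a.1 • ex + a.2 • eθ := by
  simp [ex, eθ]

lemma IsBilin.zero_left {m : V → V → V} (hm : IsBilin m) (b : V) : m 0 b = 0 := by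
  simpa using hm.2.1 0 0 b

lemma IsBilin.zero_right {m : V → V → V} (hm : IsBilin m) (a : V) : m a 0 = 0 := by
  simpa using hm.2.2.2 0 a 0

lemma IsBilin.eq_basis_expansion {m : V → V → V} (hm : IsBilin m) (a b : V) :
    m a b = (a.1 * b.1) • m ex ex + (a.1 * b.2) • m ex eθ
      + (a.2 * b.1) • m eθ ex + (a.2 * b.2) • m eθ eθ := by
  obtain ⟨add_left, smul_left, add_right, smul_right⟩ := hm
  conv_lhs => rw [eq_smul_ex_add_smul_eθ a, eq_smul_ex_add_smul_eθ b]
  simp only [add_left, add_right, smul_left, smul_right, smul_smul]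
  abel

lemma IsCocycle2.mul3_basis_values {φ : V → V → V} (hφ : IsBilin φ) (hc : IsCocycle2 mul3 φ) :
    ∃ α β : ℂ, φ ex ex = (α, 0) ∧ φ ex eθ = (β, 0) ∧ φ eθ ex = (0, α) ∧ φ eθ eθ = (0, β) := by
  have cocycle_fst : ∀ a b c, (mul3 a (φ b c) - φ (mul3 a b) c + φ a (mul3 b c)
      - mul3 (φ a b) c).1 = 0 := fun a b c => by rw [hc a b c]; rfl
  have hxxx := cocycle_fst ex ex ex
  have hxxθ := cocycle_fst ex ex eθ
  have hxθx := cocycle_fst ex eθ ex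
  have hxθθ := cocycle_fst ex eθ eθ
  have hθθx := cocycle_fst eθ eθ ex
  have hθθθ := cocycle_fst eθ eθ eθ
  simp only [mul3_ex_ex, mul3_ex_eθ, mul3_eθ_ex, mul3_eθ_eθ, hφ.zero_left, hφ.zero_right]
    at hxxx hxxθ hxθx hxθθ hθθx hθθθ
  simp only [mul3, ex_fst, ex_snd, eθ_fst, eθ_snd, Prod.fst_sub, Prod.fst_add, Prod.fst_zero]
    at hxxx hxxθ hxθx hxθθ hθθx hθθθ
  refine ⟨(φ ex ex).1, (φ ex eθ).1, Prod.ext rfl ?_, Prod.ext rfl ?_, Prod.ext ?_ ?_,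
    Prod.ext ?_ ?_⟩ <;> dsimp only
  · linear_combination hxxx
  · linear_combination hxxθ
  · linear_combination -hθθx
  · linear_combination hxθx
  · linear_combination -hθθθ
  · linear_combination hxθθ

def smulRightθ (α β : ℂ) : V →ₗ[ℂ] V :=
  (α • LinearMap.fst ℂ ℂ ℂ + β • LinearMap.snd ℂ ℂ ℂ).smulRight eθ

@[simp] lemma smulRightθ_apply (α β : ℂ) (p : V) :
    smulRightθ α β p = (0, α * p.1 + β * p.2) := by
  simp [smulRightθ, eθ]

lemma mul3_coboundary_smulRightθ (α β : ℂ) (a b : V) :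
    mul3 a (smulRightθ α β b) - smulRightθ α β (mul3 a b) + mul3 (smulRightθ α β a) b
      = (a.1 * b.1) • (α, 0) + (a.1 * b.2) • (β, 0)
        + (a.2 * b.1) • (0, α) + (a.2 * b.2) • (0, β) := by
  simp only [smulRightθ_apply, mul3, Prod.ext_iff, Prod.fst_add, Prod.snd_add, Prod.fst_sub,
    Prod.snd_sub, Prod.smul_fst, Prod.smul_snd, smul_eq_mul]
  constructor <;> ring

/-- Every infinitesimal deformation of `d₃` (`x² = 0`, `xθ = x`, `θx = 0`,
`θ² = θ`) is trivial: every Hochschild 2-cocycle is a coboundary, i.e.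
`H²(d₃) = 0`. -/
theorem stmt17 :
    ∀ φ : V → V → V, IsBilin φ → IsCocycle2 mul3 φ → IsCoboundary2 mul3 φ := by
  intro φ hφ hc
  obtain ⟨α, β, hxx, hxθ, hθx, hθθ⟩ := hc.mul3_basis_values hφ
  refine ⟨smulRightθ α β, fun a b => ?_⟩
  rw [mul3_coboundary_smulRightθ, hφ.eq_basis_expansion a b, hxx, hxθ, hθx, hθθ]
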